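/- For every ζ ≥ 0 and every real x, Δ(ζ, x) ≤ Δ(ζ, 0) = √(ζ² + 1) − ζ, and moreover √(ζ² + 1) − ζ ≤ 1/(1 + ζ). -/

import Mathlib

/-!
Any square root `s` of `w` has `(Im s)² = (‖w‖ - Re w) / 2`. For `w = (iζ - x)² - 1` the real part
is `x² - ζ² - 1` while `‖w‖ ≤ ‖iζ - x‖² + 1 = x² + ζ² + 1`, so `(Im φ_x(iζ))² ≤ ζ² + 1`, with
equality at `x = 0`, where `w = -(ζ² + 1)` is a negative real. Finally
`√(ζ² + 1) - ζ = 1 / (√(ζ² + 1) + ζ) ≤ 1 / (1 + ζ)`.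
-/

noncomputable def upperSqrt (w : ℂ) : ℂ :=
  if 0 < (w ^ (1/2 : ℂ)).im then w ^ (1/2 : ℂ) else -(w ^ (1/2 : ℂ))

noncomputable def slitMap (x : ℝ) (z : ℂ) : ℂ :=
  (x : ℂ) + upperSqrt ((z - (x : ℂ)) ^ 2 - 1)

/-- Vertical displacement of the point `iζ` under the slit map attached at `x`. -/
noncomputable def Δ (ζ x : ℝ) : ℝ := (slitMap x (Complex.I * ζ)).im - ζ

open Complex

lemma upperSqrt_sq (w : ℂ) : upperSqrt w ^ 2 = w := by
  unfold upperSqrt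
  split_ifs <;> simp

lemma upperSqrt_im_nonneg (w : ℂ) : 0 ≤ (upperSqrt w).im := by
  unfold upperSqrt
  split_ifs with h
  · exact h.le
  · simpa using le_of_not_gt h

lemma im_sq_eq_of_sq_eq {s w : ℂ} (h : s ^ 2 = w) : s.im ^ 2 = (‖w‖ - w.re) / 2 := by
  subst h
  rw [norm_pow, Complex.sq_norm, normSq_apply, sq s, mul_re]
  ring

lemma upperSqrt_im (w : ℂ) : (upperSqrt w).im = √((‖w‖ - w.re) / 2) := by
  rw [← im_sq_eq_of_sq_eq (upperSqrt_sq w), Real.sqrt_sq (upperSqrt_im_nonneg w)]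

lemma Δ_eq (ζ x : ℝ) :
    Δ ζ x = √((‖(I * ζ - x) ^ 2 - 1‖ - (x ^ 2 - ζ ^ 2 - 1)) / 2) - ζ := by
  have hre : ((I * ζ - x) ^ 2 - 1 : ℂ).re = x ^ 2 - ζ ^ 2 - 1 := by
    simp [sq]
  simp only [Δ, slitMap, add_im, ofReal_im, zero_add, upperSqrt_im, hre]

lemma norm_I_mul_sub_sq_sub_one_le (ζ x : ℝ) :
    ‖(I * ζ - x) ^ 2 - 1‖ ≤ x ^ 2 + ζ ^ 2 + 1 := by
  have hnorm : ‖I * ζ - x‖ ^ 2 = x ^ 2 + ζ ^ 2 := by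
    rw [Complex.sq_norm, normSq_apply]
    simp only [sub_re, sub_im, mul_re, mul_im, I_re, I_im, ofReal_re, ofReal_im]
    ring
  calc ‖(I * ζ - x) ^ 2 - 1‖ ≤ ‖I * ζ - x‖ ^ 2 + ‖(1 : ℂ)‖ := by
        rw [← norm_pow]; exact norm_sub_le _ _
    _ = x ^ 2 + ζ ^ 2 + 1 := by rw [hnorm, norm_one]

lemma norm_I_mul_sq_sub_one (ζ : ℝ) : ‖(I * ζ) ^ 2 - 1‖ = ζ ^ 2 + 1 := by
  have h : (I * ζ) ^ 2 - 1 = -((ζ ^ 2 + 1 : ℝ) : ℂ) := by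
    push_cast
    linear_combination (ζ : ℂ) ^ 2 * I_sq
  rw [h, norm_neg, norm_real, Real.norm_of_nonneg (by positivity)]

lemma sqrt_sq_add_one_sub_le {ζ : ℝ} (hζ : 0 ≤ ζ) : √(ζ ^ 2 + 1) - ζ ≤ 1 / (1 + ζ) := by
  have hone : 1 ≤ √(ζ ^ 2 + 1) := Real.one_le_sqrt.mpr (le_add_of_nonneg_left (sq_nonneg ζ))
  have hconj : √(ζ ^ 2 + 1) - ζ = 1 / (√(ζ ^ 2 + 1) + ζ) := by
    rw [eq_div_iff (by positivity)]
    linear_combination Real.sq_sqrt (show 0 ≤ ζ ^ 2 + 1 by positivity)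
  rw [hconj]
  gcongr

theorem delta_max_at_zero (ζ : ℝ) (hζ : 0 ≤ ζ) :
    (∀ x : ℝ, Δ ζ x ≤ Δ ζ 0) ∧
      Δ ζ 0 = Real.sqrt (ζ ^ 2 + 1) - ζ ∧
      Real.sqrt (ζ ^ 2 + 1) - ζ ≤ 1 / (1 + ζ) := by
  have hΔ0 : Δ ζ 0 = √(ζ ^ 2 + 1) - ζ := by
    rw [Δ_eq, ofReal_zero, sub_zero, norm_I_mul_sq_sub_one]
    ring_nf
  refine ⟨fun x => ?_, hΔ0, sqrt_sq_add_one_sub_le hζ⟩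
  rw [hΔ0, Δ_eq]
  gcongr
  linarith [norm_I_mul_sub_sq_sub_one_le ζ x]
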